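/- If z^{(m)}(τ) = c·∑_{k=1}^K λ_k·max(t_k − τ, 0)^m on [t_1, t_K] for constants c, λ_k, then z is a spline of order 2m: on each interval [t_i, t_{i+1}] it coincides with a polynomial of degree at most 2m, and z is (2m−1)-times continuously differentiable at the interior knots for m ≥ 1. -/

import Mathlib

/-!
The function `W τ = ∑ k, λ k * (t k - τ)₊ ^ (2m)` has `m`-th derivative
`(-1)^m (2m)!/m! · ∑ k, λ k * (t k - τ)₊ ^ m`. Hence `z - c / ((-1)^m (2m)!/m!) · W` has
vanishing `m`-th derivative on `[t₁, t_K]`, so it is a polynomial of degree `< m` there by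
Taylor's theorem. Each truncated power `(t k - τ)₊ ^ (2m)` is `C^(2m-1)`, and it is a polynomial
of degree `2m` on every interval that contains no knot in its interior.
-/

open Set Polynomial
open scoped Nat

theorem hasDerivAt_max_zero_pow {n : ℕ} (hn : n ≠ 0) (x : ℝ) :
    HasDerivAt (fun y : ℝ => max y 0 ^ (n + 1)) ((n + 1) * max x 0 ^ n) x := by
  rcases lt_trichotomy x 0 with hx | rfl | hx
  · have hzero : (fun y : ℝ => max y 0 ^ (n + 1)) =ᶠ[nhds x] fun _ => 0 := by
      filter_upwards [eventually_lt_nhds hx] with y hy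
      simp [max_eq_right hy.le]
    simpa [max_eq_right hx.le, hn] using (hasDerivAt_const x (0 : ℝ)).congr_of_eventuallyEq hzero
  · have hleft : HasDerivWithinAt (fun y : ℝ => max y 0 ^ (n + 1)) 0 (Iic 0) 0 :=
      (hasDerivWithinAt_const 0 _ (0 : ℝ)).congr
        (fun y hy => by simp [max_eq_right (mem_Iic.mp hy)]) (by simp)
    have hright : HasDerivWithinAt (fun y : ℝ => max y 0 ^ (n + 1)) 0 (Ici 0) 0 := by
      simpa [hn] using ((hasDerivAt_pow (n + 1) (0 : ℝ)).hasDerivWithinAt (s := Ici 0)).congr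
        (fun y hy => by simp [max_eq_left (mem_Ici.mp hy)]) (by simp)
    simpa [hn, ← hasDerivWithinAt_univ] using hleft.union hright
  · have hpow : (fun y : ℝ => max y 0 ^ (n + 1)) =ᶠ[nhds x] fun y => y ^ (n + 1) := by
      filter_upwards [eventually_gt_nhds hx] with y hy
      simp [max_eq_left hy.le]
    simpa [max_eq_left hx.le] using (hasDerivAt_pow (n + 1) x).congr_of_eventuallyEq hpow

theorem iteratedDeriv_max_zero_pow {N j : ℕ} (hj : j < N) :
    iteratedDeriv j (fun x : ℝ => max x 0 ^ N) =
      fun x => (N.descFactorial j : ℝ) * max x 0 ^ (N - j) := by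
  induction j with
  | zero => simp
  | succ j ih =>
    obtain ⟨n, hn⟩ : ∃ n, N - j = n + 1 := ⟨N - j - 1, by omega⟩
    ext x
    rw [iteratedDeriv_succ, ih (by omega), Nat.descFactorial_succ, hn,
      ((hasDerivAt_max_zero_pow (by omega) x).const_mul _).deriv, show N - (j + 1) = n by omega]
    push_cast
    ring

theorem contDiff_max_zero_pow (n : ℕ) : ContDiff ℝ n (fun x : ℝ => max x 0 ^ (n + 1)) := by
  refine contDiff_nat_iff_iteratedDeriv.2 ⟨fun j hj => ?_, fun j hj => ?_⟩
  · rw [iteratedDeriv_max_zero_pow (N := n + 1) (by omega)]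
    fun_prop
  · rw [iteratedDeriv_max_zero_pow (N := n + 1) (by omega)]
    obtain ⟨k, hk⟩ : ∃ k, n + 1 - j = k + 1 + 1 := ⟨n - j - 1, by omega⟩
    rw [hk]
    exact fun x => ((hasDerivAt_max_zero_pow k.succ_ne_zero x).const_mul _).differentiableAt

theorem iteratedDeriv_max_sub_pow (a : ℝ) {N j : ℕ} (hj : j < N) (τ : ℝ) :
    iteratedDeriv j (fun τ : ℝ => max (a - τ) 0 ^ N) τ =
      (-1) ^ j * N.descFactorial j * max (a - τ) 0 ^ (N - j) := by
  rw [iteratedDeriv_comp_const_sub j (fun x : ℝ => max x 0 ^ N), iteratedDeriv_max_zero_pow hj]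
  simp only [smul_eq_mul, mul_assoc]

theorem contDiff_max_sub_pow (a : ℝ) (n : ℕ) :
    ContDiff ℝ n (fun τ : ℝ => max (a - τ) 0 ^ (n + 1)) :=
  (contDiff_max_zero_pow n).comp (contDiff_const.sub contDiff_id)

section TruncatedPowerSum

variable {ι : Type*} [Fintype ι] (t lam : ι → ℝ)

theorem contDiff_sum_max_sub_pow (n : ℕ) :
    ContDiff ℝ n (fun τ : ℝ => ∑ k, lam k * max (t k - τ) 0 ^ (n + 1)) :=
  ContDiff.sum fun k _ => contDiff_const.mul (contDiff_max_sub_pow (t k) n)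

theorem iteratedDeriv_sum_max_sub_pow {N j : ℕ} (hj : j < N) (τ : ℝ) :
    iteratedDeriv j (fun τ : ℝ => ∑ k, lam k * max (t k - τ) 0 ^ N) τ =
      (-1) ^ j * N.descFactorial j * ∑ k, lam k * max (t k - τ) 0 ^ (N - j) := by
  obtain ⟨n, rfl⟩ : ∃ n, N = n + 1 := ⟨N - 1, by omega⟩
  have hsmooth (k : ι) : ContDiff ℝ j fun τ : ℝ => lam k * max (t k - τ) 0 ^ (n + 1) :=
    (contDiff_const.mul (contDiff_max_sub_pow (t k) n)).of_le (by exact_mod_cast (by omega))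
  rw [iteratedDeriv_fun_sum fun k _ => (hsmooth k).contDiffAt, Finset.mul_sum]
  refine Finset.sum_congr rfl fun k _ => ?_
  rw [iteratedDeriv_const_mul_field, iteratedDeriv_max_sub_pow (t k) hj]
  ring

theorem exists_polynomial_eqOn_max_sub_pow (a : ℝ) (N : ℕ) {α β : ℝ}
    (h : a ≤ α ∨ β ≤ a) :
    ∃ p : ℝ[X], p.natDegree ≤ N ∧
      EqOn (fun τ : ℝ => max (a - τ) 0 ^ N) p.eval (Icc α β) := by
  rcases h with ha | ha
  · refine ⟨C (0 ^ N), by simp, fun τ hτ => ?_⟩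
    simp [max_eq_right (show a - τ ≤ 0 by linarith [hτ.1])]
  · refine ⟨(C a - X) ^ N, ?_, fun τ hτ => ?_⟩
    · simpa using natDegree_pow_le_of_le N
        (natDegree_sub_le_of_le ((natDegree_C a).trans_le zero_le_one) natDegree_X_le)
    · simp [max_eq_left (show 0 ≤ a - τ by linarith [hτ.2])]

theorem exists_polynomial_eqOn_sum_max_sub_pow (N : ℕ) {α β : ℝ}
    (h : ∀ k, t k ≤ α ∨ β ≤ t k) :
    ∃ p : ℝ[X], p.natDegree ≤ N ∧
      EqOn (fun τ : ℝ => ∑ k, lam k * max (t k - τ) 0 ^ N) p.eval (Icc α β) := by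
  choose p hp_deg hp using fun k => exists_polynomial_eqOn_max_sub_pow (t k) N (h k)
  refine ⟨∑ k, C (lam k) * p k, ?_, fun τ hτ => ?_⟩
  · exact natDegree_sum_le_of_forall_le _ _ fun k _ => (natDegree_C_mul_le _ _).trans (hp_deg k)
  · simp [eval_finsetSum, hp _ hτ]

end TruncatedPowerSum

theorem exists_polynomial_eqOn_of_iteratedDeriv_eq_zero {f : ℝ → ℝ} {n : ℕ} (hn : 0 < n)
    (hf : ContDiff ℝ n f) {a b : ℝ} (h : ∀ x ∈ Icc a b, iteratedDeriv n f x = 0) :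
    ∃ p : ℝ[X], p.natDegree < n ∧ EqOn f p.eval (Icc a b) := by
  obtain ⟨n, rfl⟩ : ∃ k, n = k + 1 := ⟨n - 1, by omega⟩
  refine ⟨∑ k ∈ Finset.range (n + 1),
    C ((k ! : ℝ)⁻¹ * iteratedDeriv k f a) * (X - C a) ^ k, ?_, fun x hx => ?_⟩
  · refine (natDegree_sum_le_of_forall_le _ _ fun k hk => ?_).trans_lt n.lt_succ_self
    refine (natDegree_C_mul_le _ _).trans
      ((natDegree_pow_le_of_le k (natDegree_X_sub_C_le a)).trans ?_)
    simpa [Nat.lt_succ_iff] using hk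
  rcases hx.1.eq_or_lt with rfl | hax
  · simp [eval_finsetSum, Finset.sum_range_succ']
  obtain ⟨x', hx', htaylor⟩ := taylor_mean_remainder_lagrange_iteratedDeriv hax.ne hf.contDiffOn
  rw [uIoo_of_le hax.le] at hx'
  rw [h x' ⟨hx'.1.le, hx'.2.le.trans hx.2⟩, zero_mul, zero_div, sub_eq_zero,
    taylor_within_apply] at htaylor
  dsimp only
  rw [htaylor, eval_finsetSum]
  refine Finset.sum_congr rfl fun k hk => ?_
  rw [iteratedDerivWithin_eq_iteratedDeriv (uniqueDiffOn_uIcc hax.ne) _ left_mem_uIcc]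
  · simp only [smul_eq_mul, eval_mul, eval_C, eval_pow, eval_sub, eval_X]
    ring
  · exact hf.contDiffAt.of_le (by exact_mod_cast (Finset.mem_range.mp hk).le)

theorem eqOn_polynomial_add_sum_max_sub_pow {ι : Type*} [Fintype ι] (t lam : ι → ℝ) {m : ℕ}
    (hm : 0 < m) {z : ℝ → ℝ} (hz : ContDiff ℝ m z) {a b c : ℝ}
    (h : ∀ τ ∈ Icc a b, iteratedDeriv m z τ = c * ∑ k, lam k * max (t k - τ) 0 ^ m) :
    ∃ q : ℝ[X], q.natDegree < m ∧ EqOn z (fun τ => q.eval τ +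
      c / ((-1) ^ m * (2 * m).descFactorial m) * ∑ k, lam k * max (t k - τ) 0 ^ (2 * m))
      (Icc a b) := by
  set d : ℝ := c / ((-1) ^ m * (2 * m).descFactorial m)
  have hW : ContDiff ℝ m fun τ => ∑ k, lam k * max (t k - τ) 0 ^ (2 * m) := by
    have := contDiff_sum_max_sub_pow t lam (2 * m - 1)
    rw [show 2 * m - 1 + 1 = 2 * m by omega] at this
    exact this.of_le (by exact_mod_cast (by omega : m ≤ 2 * m - 1))
  have hdesc : ((2 * m).descFactorial m : ℝ) ≠ 0 := by
    exact_mod_cast (Nat.descFactorial_pos.2 (by omega)).ne'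
  obtain ⟨q, hq_deg, hq⟩ := exists_polynomial_eqOn_of_iteratedDeriv_eq_zero hm
    (hz.sub ((contDiff_const (c := d)).mul hW)) fun τ hτ => by
      rw [iteratedDeriv_fun_sub hz.contDiffAt (contDiff_const.mul hW).contDiffAt,
        iteratedDeriv_const_mul_field, iteratedDeriv_sum_max_sub_pow t lam (by omega),
        h τ hτ, show 2 * m - m = m by omega]
      simp only [d]
      field_simp
      ring
  exact ⟨q, hq_deg, fun τ hτ => by simp [← hq hτ]⟩

theorem stmt_10 (K m : ℕ) (hm : 1 ≤ m) (hK : 0 < K)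
    (t : Fin K → ℝ) (ht : StrictMono t) (c : ℝ) (lam : Fin K → ℝ)
    (z : ℝ → ℝ) (hz : ContDiff ℝ m z)
    (hderiv : ∀ τ ∈ Set.Icc (t ⟨0, hK⟩) (t ⟨K - 1, by omega⟩),
      iteratedDeriv m z τ = c * ∑ k, lam k * max (t k - τ) 0 ^ m) :
    (∀ i : Fin (K - 1), ∃ p : Polynomial ℝ, p.natDegree ≤ 2 * m ∧
        ∀ τ ∈ Set.Icc (t ⟨i.1, by omega⟩) (t ⟨i.1 + 1, by omega⟩),
          z τ = p.eval τ) ∧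
      ContDiffOn ℝ (2 * m - 1)
        z (Set.Icc (t ⟨0, hK⟩) (t ⟨K - 1, by omega⟩)) := by
  obtain ⟨q, hq_deg, hz_eq⟩ := eqOn_polynomial_add_sum_max_sub_pow t lam hm hz hderiv
  set d : ℝ := c / ((-1) ^ m * (2 * m).descFactorial m)
  refine ⟨fun i => ?_, ?_⟩
  · obtain ⟨r, hr_deg, hr⟩ := exists_polynomial_eqOn_sum_max_sub_pow t lam (2 * m)
      (α := t ⟨i.1, by omega⟩) (β := t ⟨i.1 + 1, by omega⟩) fun k => by
        rcases le_or_gt k.1 i.1 with hk | hk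
        · exact .inl (ht.monotone hk)
        · exact .inr (ht.monotone (Nat.succ_le_of_lt hk))
    refine ⟨q + C d * r, ?_, fun τ hτ => ?_⟩
    · exact (natDegree_add_le _ _).trans
        (max_le (by omega) ((natDegree_C_mul_le _ _).trans hr_deg))
    · have hτ' : τ ∈ Icc (t ⟨0, hK⟩) (t ⟨K - 1, by omega⟩) :=
        ⟨(ht.monotone (Nat.zero_le _)).trans hτ.1,
          hτ.2.trans (ht.monotone (Fin.mk_le_mk.2 (by omega)))⟩
      rw [hz_eq hτ', eval_add, eval_mul, eval_C]
      exact congrArg (eval τ q + d * ·) (hr hτ)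
  · have hW := contDiff_sum_max_sub_pow t lam (2 * m - 1)
    rw [show 2 * m - 1 + 1 = 2 * m by omega] at hW
    refine (((contDiff_aeval q _).add (contDiff_const.mul hW)).contDiffOn.congr hz_eq).of_le ?_
    exact tsub_le_iff_right.2 (by exact_mod_cast (by omega : 2 * m ≤ 2 * m - 1 + 1))
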